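/- arXiv:2308.15021 — 3 statements merged into one kernel-verified Lean document; each statement's English description precedes it below -/
import Mathlib

section
/- Let G be a simple graph on vertex set {1,…,n}, let a ∈ ℕ^n and U = supp(a). A subset Z of the vertex set of the parallelization G^a is a minimal vertex cover of G^a if and only if Z = p^{-1}(D) for some minimal vertex cover D of the induced subgraph G_U. -/
open MvPolynomial

/-! ## Algebraic notions: depth of quotients by homogeneous (monomial) ideals,
and the index of depth stability. -/

/-- The depth of `R/J` (for `R` a polynomial ring): the maximal length of a regular
sequence of homogeneous elements on `R/J`. -/
noncomputable def homDepth {k : Type} [Field k] {n : ℕ}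
    (J : Ideal (MvPolynomial (Fin n) k)) : ℕ :=
  sSup {r | ∃ rs : List (MvPolynomial (Fin n) k), rs.length = r ∧
    (∀ f ∈ rs, ∃ d, MvPolynomial.IsHomogeneous f d) ∧
    RingTheory.Sequence.IsRegular (MvPolynomial (Fin n) k ⧸ J) rs}

/-- The index of depth stability of an ideal `I`: the least `s ≥ 1` such that
`depth R/I^t = depth R/I^s` for all `t ≥ s`. -/
noncomputable def dstab {k : Type} [Field k] {n : ℕ}
    (I : Ideal (MvPolynomial (Fin n) k)) : ℕ :=
  sInf {s | 1 ≤ s ∧ ∀ t, s ≤ t → homDepth (I ^ t) = homDepth (I ^ s)}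

/-- The edge ideal of a graph `G` on vertices `{1,…,n}`: generated by the
monomials `xᵢxⱼ` for the edges `{i,j}` of `G`. -/
noncomputable def edgeIdeal (k : Type) [Field k] {n : ℕ} (G : SimpleGraph (Fin n)) :
    Ideal (MvPolynomial (Fin n) k) :=
  Ideal.span {m | ∃ i j, G.Adj i j ∧ m = X i * X j}

/-! ## Graph-theoretic notions -/

/-- A list of vertices forming an open path (at least one edge, no repeated vertex). -/
def IsOpenPathList {V : Type} (L : List V) : Prop := 2 ≤ L.length ∧ L.Nodup

/-- A list of vertices forming a (proper) cycle: closed, at least 3 edges,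
no repeated vertex except that the first vertex equals the last one. -/
def IsProperCycleList {V : Type} (L : List V) : Prop :=
  4 ≤ L.length ∧ L.head? = L.getLast? ∧ L.dropLast.Nodup

/-- A 2-cycle: an edge `{v,w}` with a specified endpoint `v`, regarded as the
closed walk `v, w, v` of length 2. -/
def IsTwoCycleList {V : Type} (L : List V) : Prop := ∃ v w : V, v ≠ w ∧ L = [v, w, v]

/-- An ear is a path (possibly closed, i.e. a cycle) or a 2-cycle. -/
def IsEarList {V : Type} (L : List V) : Prop :=
  IsOpenPathList L ∨ IsProperCycleList L ∨ IsTwoCycleList L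

/-- An ear which is a cycle (a proper cycle or a 2-cycle). -/
def IsCycleEarList {V : Type} (L : List V) : Prop :=
  IsProperCycleList L ∨ IsTwoCycleList L

/-- The set of edges traversed by an ear, as unordered pairs. -/
def earEdgeSet {V : Type} (L : List V) : Set (Sym2 V) :=
  {e | ∃ p ∈ L.zip L.tail, e = s(p.1, p.2)}

/-- A generalized ear decomposition of a connected graph `G`: a partition of the
edge set of `G` into a sequence of ears `L₁,…,L_r` (paths or 2-cycles) such that
`L₁` is a cycle (possibly a 2-cycle) and each later ear meets the union of the
earlier ones exactly at its endpoints. -/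
structure GenEarDecomp {V : Type} (G : SimpleGraph V) : Type where
  ears : List (List V)
  ears_nonempty : ears ≠ []
  chain_adj : ∀ L ∈ ears, L.Chain' G.Adj
  shape : ∀ L ∈ ears, IsEarList L
  first_cycle : ∀ L ∈ ears.head?, IsCycleEarList L
  attach_ends : ∀ (i : ℕ) (hi : i < ears.length), 1 ≤ i →
      (∀ x ∈ (ears.get ⟨i, hi⟩).head?, x ∈ (ears.take i).flatten) ∧
      (∀ x ∈ (ears.get ⟨i, hi⟩).getLast?, x ∈ (ears.take i).flatten)
  attach_inner : ∀ (i : ℕ) (hi : i < ears.length), 1 ≤ i →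
      ∀ x ∈ (ears.get ⟨i, hi⟩).tail.dropLast, x ∉ (ears.take i).flatten
  edges_disjoint : ∀ (i j : ℕ) (hi : i < ears.length) (hj : j < ears.length), i ≠ j →
      Disjoint (earEdgeSet (ears.get ⟨i, hi⟩)) (earEdgeSet (ears.get ⟨j, hj⟩))
  edges_cover : ∀ e, e ∈ G.edgeSet ↔ ∃ L ∈ ears, e ∈ earEdgeSet L

/-- The number of even ears (ears with an even number of edges; in particular all
2-cycles) of a generalized ear decomposition.  An ear with vertex list `L` has
`L.length - 1` edges, so it is even iff `L.length` is odd. -/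
def evenEarCount {V : Type} {G : SimpleGraph V} (E : GenEarDecomp G) : ℕ :=
  (E.ears.filter (fun L => L.length % 2 == 1)).length

/-- `φ(G)`: the minimal number of even ears in a generalized ear decomposition of `G`. -/
noncomputable def phiGraph {V : Type} (G : SimpleGraph V) : ℕ :=
  sInf {m | ∃ E : GenEarDecomp G, evenEarCount E = m}

/-- `μ(G) = (φ(G) + v(G) - 1)/2` for a connected graph `G`. -/
noncomputable def muGraph {V : Type} (G : SimpleGraph V) : ℕ :=
  (phiGraph G + Nat.card V - 1) / 2

/-- A dominating set: every vertex outside `U` is adjacent to a vertex of `U`. -/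
def IsDominatingSet {V : Type} (G : SimpleGraph V) (U : Set V) : Prop :=
  ∀ v ∉ U, ∃ u ∈ U, G.Adj v u

/-- `(A,B)` is a bipartition of `G`. -/
def IsBipartitionOf {V : Type} (G : SimpleGraph V) (A B : Set V) : Prop :=
  (∀ v, v ∈ A ∨ v ∈ B) ∧ A ∩ B = ∅ ∧
    ∀ ⦃v w⦄, G.Adj v w → ((v ∈ A ∧ w ∈ B) ∨ (v ∈ B ∧ w ∈ A))

/-- `G` is bipartite. -/
def IsBipartiteGraph {V : Type} (G : SimpleGraph V) : Prop :=
  ∃ A B : Set V, IsBipartitionOf G A B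

/-- `G` is a complete bipartite graph. -/
def IsCompleteBipartite {V : Type} (G : SimpleGraph V) : Prop :=
  ∃ A B : Set V, IsBipartitionOf G A B ∧ ∀ a ∈ A, ∀ b ∈ B, G.Adj a b

open Classical in
/-- `s(G)` for a connected bipartite graph `G`: `0` if `G` is complete bipartite,
and otherwise the minimum of `μ(G_U)` over all dominating connected induced
subgraphs `G_U` of `G`. -/
noncomputable def sBip {V : Type} (G : SimpleGraph V) : ℕ :=
  if IsCompleteBipartite G then 0
  else sInf {m | ∃ U : Set V, IsDominatingSet G U ∧ (G.induce U).Connected ∧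
    muGraph (G.induce U) = m}

/-- A graph is strongly nonbipartite if every connected component is nonbipartite. -/
def StronglyNonbipartite {V : Type} (G : SimpleGraph V) : Prop :=
  ∀ c : G.ConnectedComponent, ¬ IsBipartiteGraph (G.induce c.supp)

/-- `φ*(G)` for a (strongly nonbipartite) graph `G`: the minimal total number of even
ears in generalized ear decompositions of the connected components of `G` whose first
ear in each component is an odd cycle. -/
noncomputable def phiStar {V : Type} (G : SimpleGraph V) : ℕ :=
  sInf {m | ∃ D : ∀ c : G.ConnectedComponent, GenEarDecomp (G.induce c.supp),
    (∀ c, ∀ L ∈ (D c).ears.head?, IsProperCycleList L ∧ L.length % 2 = 0) ∧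
    (∑ᶠ c, evenEarCount (D c)) = m}

/-- `μ*(G) = (φ*(G) + v(G) - c)/2` where `c` is the number of connected components. -/
noncomputable def muStar {V : Type} (G : SimpleGraph V) : ℕ :=
  (phiStar G + Nat.card V - Nat.card G.ConnectedComponent) / 2

/-- `s(G)` for a connected nonbipartite graph `G`: the minimum of `μ*(G_U)` over all
dominating strongly nonbipartite induced subgraphs `G_U` of `G`. -/
noncomputable def sNonbip {V : Type} (G : SimpleGraph V) : ℕ :=
  sInf {m | ∃ U : Set V, IsDominatingSet G U ∧ StronglyNonbipartite (G.induce U) ∧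
    muStar (G.induce U) = m}

open Classical in
/-- `s` of a connected component of a graph, according to whether the component
is bipartite or not. -/
noncomputable def sComp {V : Type} (G : SimpleGraph V) (c : G.ConnectedComponent) : ℕ :=
  if IsBipartiteGraph (G.induce c.supp) then sBip (G.induce c.supp)
  else sNonbip (G.induce c.supp)

/-- A vertex cover of `G`. -/
def IsVertexCover {V : Type} (G : SimpleGraph V) (C : Set V) : Prop :=
  ∀ ⦃v w⦄, G.Adj v w → v ∈ C ∨ w ∈ C

/-- A minimal vertex cover of `G`. -/
def IsMinimalVertexCover {V : Type} (G : SimpleGraph V) (C : Set V) : Prop :=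
  IsVertexCover G C ∧ ∀ D ⊆ C, IsVertexCover G D → D = C

/-- `a` is a solution of the system `(*)` associated with the connected bipartite
graph `G` with bipartition `(A,B)`:
`Σ_{i∈A} aᵢ = Σ_{i∈B} aᵢ` and `Σ_{i∈C} aᵢ > Σ_{i∈A} aᵢ` for every minimal vertex
cover `C ≠ A, B` of `G`. -/
def SolvesStar {V : Type} (G : SimpleGraph V) (A B : Set V) (a : V → ℕ) : Prop :=
  (∑ᶠ i ∈ A, a i) = (∑ᶠ i ∈ B, a i) ∧
  ∀ C : Set V, IsMinimalVertexCover G C → C ≠ A → C ≠ B →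
    (∑ᶠ i ∈ A, a i) < (∑ᶠ i ∈ C, a i)

/-- The parallelization `G^a` of `G`: each vertex `i` is replaced by `a i` copies
(`i` is deleted when `a i = 0`), two copies being adjacent iff the original
vertices are adjacent in `G`. -/
def parallelization {V : Type} (G : SimpleGraph V) (a : V → ℕ) :
    SimpleGraph (Σ i : V, Fin (a i)) where
  Adj x y := G.Adj x.1 y.1
  symm := ⟨fun _ _ h => G.symm.symm _ _ h⟩
  loopless := ⟨fun x h => G.loopless.irrefl x.1 h⟩

/-- A connected graph is matching-covered if it is not an isolated vertex and every
edge is contained in a perfect matching. -/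
def IsMatchingCovered {W : Type} (H : SimpleGraph W) : Prop :=
  H.Connected ∧ H.edgeSet.Nonempty ∧
    ∀ e ∈ H.edgeSet, ∃ M : H.Subgraph, M.IsPerfectMatching ∧ e ∈ M.edgeSet

/-- An independent set of `G`. -/
def IsIndependentSet {V : Type} (G : SimpleGraph V) (F : Set V) : Prop :=
  ∀ ⦃v⦄, v ∈ F → ∀ ⦃w⦄, w ∈ F → ¬ G.Adj v w

/-- A maximal independent set of `G`. -/
def IsMaxIndependentSet {V : Type} (G : SimpleGraph V) (F : Set V) : Prop :=
  IsIndependentSet G F ∧ ∀ F', IsIndependentSet G F' → F ⊆ F' → F' = F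

/-- The number of leaves (vertices of degree 1) of `G`. -/
noncomputable def leafCount {V : Type} (G : SimpleGraph V) : ℕ :=
  {v : V | (G.neighborSet v).ncard = 1}.ncard


/-! A cover `C` is minimal exactly when every vertex of `C` has a neighbour outside `C`.
`G^a` is the pullback of `G_U` along the surjective projection `p`, and for a pullback along a
surjection both conditions transfer between `D` and `p⁻¹(D)`. A minimal cover `Z` of a pullback is
saturated: a copy `y` of a vertex `x ∈ Z` has the same neighbours as `x`, in particular the
neighbour of `x` outside `Z`, so `y ∈ Z`; hence `Z = p⁻¹(p(Z))`. -/

open Function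

section VertexCover

variable {V W : Type} {G : SimpleGraph W}

theorem IsVertexCover.sdiff_singleton {C : Set W} (hC : IsVertexCover G C) {v : W}
    (hv : ∀ w, G.Adj v w → w ∈ C) : IsVertexCover G (C \ {v}) := by
  intro x y hxy
  by_cases hxv : x = v
  · subst hxv
    exact .inr ⟨hv y hxy, (G.ne_of_adj hxy).symm⟩
  by_cases hyv : y = v
  · subst hyv
    exact .inl ⟨hv x hxy.symm, G.ne_of_adj hxy⟩
  exact (hC hxy).imp (⟨·, hxv⟩) (⟨·, hyv⟩)

theorem isMinimalVertexCover_iff_forall_exists_adj_notMem {C : Set W} :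
    IsMinimalVertexCover G C ↔ IsVertexCover G C ∧ ∀ v ∈ C, ∃ w ∉ C, G.Adj v w := by
  refine ⟨fun ⟨hC, hmin⟩ => ⟨hC, fun v hv => ?_⟩, fun ⟨hC, hpriv⟩ => ⟨hC, fun D hDC hD => ?_⟩⟩
  · by_contra! hno
    have hcover := hC.sdiff_singleton fun w hvw => not_not.mp fun hw => hno w hw hvw
    have hv' : v ∈ C \ {v} := (hmin _ Set.sdiff_subset hcover).symm ▸ hv
    exact hv'.2 rfl
  · refine hDC.antisymm fun v hv => ?_
    obtain ⟨w, hwC, hvw⟩ := hpriv v hv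
    exact (hD hvw).resolve_right fun hwD => hwC (hDC hwD)

variable {f : V → W}

theorem isVertexCover_comap_preimage_iff (hf : Surjective f) {C : Set W} :
    IsVertexCover (G.comap f) (f ⁻¹' C) ↔ IsVertexCover G C := by
  refine ⟨fun hC v w hvw => ?_, fun hC x y hxy => hC hxy⟩
  obtain ⟨x, rfl⟩ := hf v
  obtain ⟨y, rfl⟩ := hf w
  exact hC (show (G.comap f).Adj x y from hvw)

theorem isMinimalVertexCover_comap_preimage_iff (hf : Surjective f) {C : Set W} :
    IsMinimalVertexCover (G.comap f) (f ⁻¹' C) ↔ IsMinimalVertexCover G C := by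
  simp only [isMinimalVertexCover_iff_forall_exists_adj_notMem,
    isVertexCover_comap_preimage_iff hf, hf.forall, Set.mem_preimage, SimpleGraph.comap_adj]
  refine and_congr_right fun _ => forall₂_congr fun x _ => ⟨?_, ?_⟩
  · rintro ⟨y, hy, hxy⟩
    exact ⟨f y, hy, hxy⟩
  · rintro ⟨w, hw, hxw⟩
    obtain ⟨y, rfl⟩ := hf w
    exact ⟨y, hw, hxw⟩

theorem IsMinimalVertexCover.preimage_image_comap {Z : Set V}
    (hZ : IsMinimalVertexCover (G.comap f) Z) : f ⁻¹' (f '' Z) = Z := by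
  rw [isMinimalVertexCover_iff_forall_exists_adj_notMem] at hZ
  refine (Set.subset_preimage_image f Z).antisymm' ?_
  rintro y ⟨x, hx, hxy⟩
  obtain ⟨w, hw, hxw⟩ := hZ.2 x hx
  have hyw : (G.comap f).Adj y w := by
    simpa only [SimpleGraph.comap_adj, hxy] using hxw
  exact (hZ.1 hyw).resolve_right hw

theorem isMinimalVertexCover_comap_iff (hf : Surjective f) {Z : Set V} :
    IsMinimalVertexCover (G.comap f) Z ↔ ∃ D, IsMinimalVertexCover G D ∧ Z = f ⁻¹' D := by
  refine ⟨fun hZ => ⟨f '' Z, ?_, hZ.preimage_image_comap.symm⟩, ?_⟩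
  · rwa [← isMinimalVertexCover_comap_preimage_iff hf, hZ.preimage_image_comap]
  · rintro ⟨D, hD, rfl⟩
    exact (isMinimalVertexCover_comap_preimage_iff hf).mpr hD

end VertexCover

section Parallelization

variable {V : Type} (a : V → ℕ)

/-- The projection `p : G^a → G_U`, `i_r ↦ i`, with `U = supp(a)`. -/
def parallelizationProj (x : Σ i : V, Fin (a i)) : ({i : V | a i ≠ 0} : Set V) :=
  ⟨x.1, x.2.pos.ne'⟩

theorem parallelizationProj_surjective : Surjective (parallelizationProj a) :=
  fun i => ⟨⟨i.1, ⟨0, Nat.pos_of_ne_zero i.2⟩⟩, rfl⟩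

theorem parallelization_eq_comap (G : SimpleGraph V) :
    parallelization G a = (G.induce {i | a i ≠ 0}).comap (parallelizationProj a) :=
  rfl

theorem preimage_parallelizationProj (D : Set ({i : V | a i ≠ 0} : Set V)) :
    parallelizationProj a ⁻¹' D =
      {x : Σ i : V, Fin (a i) | ∃ h : x.1 ∈ {i : V | a i ≠ 0}, ⟨x.1, h⟩ ∈ D} :=
  Set.ext fun _ => ⟨fun hx => ⟨_, hx⟩, fun ⟨_, hx⟩ => hx⟩

end Parallelization

/-- **Lemma.** Let `U = supp(a)`. A subset `Z` of the vertex set of `G^a` is a minimal vertex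
cover of `G^a` iff `Z = p⁻¹(D)` for some minimal vertex cover `D` of the induced subgraph
`G_U`. -/
theorem minimalCover_parallelization_iff {n : ℕ} (G : SimpleGraph (Fin n)) (a : Fin n → ℕ)
    (Z : Set (Σ i : Fin n, Fin (a i))) :
    IsMinimalVertexCover (parallelization G a) Z ↔
      ∃ D : Set ({i : Fin n | a i ≠ 0} : Set (Fin n)),
        IsMinimalVertexCover (G.induce {i : Fin n | a i ≠ 0}) D ∧
        Z = {x : Σ i : Fin n, Fin (a i) | ∃ h : x.1 ∈ {i : Fin n | a i ≠ 0},
          (⟨x.1, h⟩ : ({i : Fin n | a i ≠ 0} : Set (Fin n))) ∈ D} := by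
  simp only [parallelization_eq_comap, isMinimalVertexCover_comap_iff
    (parallelizationProj_surjective a), preimage_parallelizationProj]
end

section
/- Let G be a simple graph on vertex set {1,…,n}, let a ∈ ℕ^n and U = supp(a). For every minimal vertex cover Z of the parallelization G^a, there exists a minimal vertex cover C of G such that Z = p^{-1}(C ∩ U) and |Z| = Σ_{i∈C} a_i. -/
open MvPolynomial

/-!
Copies of a vertex in `G^a` have the same neighbours, and every vertex of a minimal cover has
a neighbour outside it, so a minimal cover `Z` of `G^a` contains either all copies of a vertex or
none: `Z = p⁻¹(B)` with `B = p(Z) ⊆ supp(a)`. Then `B ∪ supp(a)ᶜ` covers `G`; a minimal cover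
`C` inside it still contains `B`, since each `i ∈ B` has a neighbour in `supp(a) \ B`. Hence
`C ∩ supp(a) = B`, and `|Z| = Σ_{i∈B} aᵢ = Σ_{i∈C} aᵢ` because `a` vanishes on `C \ B`.
-/

namespace IsMinimalVertexCover

variable {V : Type} {G : SimpleGraph V} {Z : Set V}

theorem exists_adj_notMem (hZ : IsMinimalVertexCover G Z) {x : V} (hx : x ∈ Z) :
    ∃ y, G.Adj x y ∧ y ∉ Z := by
  by_contra! hnbrs
  have hcover : IsVertexCover G (Z \ {x}) := by
    intro v w hvw
    by_cases hv : v = x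
    · subst hv
      exact Or.inr ⟨hnbrs w hvw, hvw.ne.symm⟩
    by_cases hw : w = x
    · subst hw
      exact Or.inl ⟨hnbrs v hvw.symm, hvw.ne⟩
    exact (hZ.1 hvw).imp (fun h => ⟨h, hv⟩) (fun h => ⟨h, hw⟩)
  have hxZ : x ∈ Z \ {x} := (hZ.2 _ Set.sdiff_subset hcover).symm ▸ hx
  exact hxZ.2 rfl

theorem mem_of_adj_imp (hZ : IsMinimalVertexCover G Z) {x x' : V} (hx : x ∈ Z)
    (hadj : ∀ y, G.Adj x y → G.Adj x' y) : x' ∈ Z := by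
  obtain ⟨y, hxy, hy⟩ := hZ.exists_adj_notMem hx
  exact (hZ.1 (hadj y hxy)).resolve_right hy

end IsMinimalVertexCover

theorem IsVertexCover.exists_isMinimalVertexCover_subset {V : Type} [Finite V]
    {G : SimpleGraph V} {W : Set V} (hW : IsVertexCover G W) :
    ∃ C ⊆ W, IsMinimalVertexCover G C := by
  obtain ⟨C, hCW, hcover, hmin⟩ := exists_minimal_le_of_wellFoundedLT _ W hW
  exact ⟨C, hCW, hcover, fun D hDC hD => (hmin hD hDC).antisymm' hDC⟩

namespace parallelization

variable {V : Type} {G : SimpleGraph V} {a : V → ℕ}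

theorem isMinimalVertexCover_eq_preimage {Z : Set (Σ i, Fin (a i))}
    (hZ : IsMinimalVertexCover (parallelization G a) Z) :
    Z = Sigma.fst ⁻¹' (Sigma.fst '' Z) := by
  refine (Set.subset_preimage_image _ _).antisymm ?_
  rintro x ⟨x', hx', hfst⟩
  exact hZ.mem_of_adj_imp hx' fun y hy => show G.Adj x.1 y.1 from hfst ▸ hy

theorem isVertexCover_image_union {Z : Set (Σ i, Fin (a i))}
    (hZ : IsVertexCover (parallelization G a) Z) :
    IsVertexCover G (Sigma.fst '' Z ∪ (Function.support a)ᶜ) := by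
  intro i j hij
  by_cases hi : a i = 0
  · exact Or.inl (Or.inr (Function.notMem_support.mpr hi))
  by_cases hj : a j = 0
  · exact Or.inr (Or.inr (Function.notMem_support.mpr hj))
  let x : Σ i, Fin (a i) := ⟨i, ⟨0, Nat.pos_of_ne_zero hi⟩⟩
  let y : Σ i, Fin (a i) := ⟨j, ⟨0, Nat.pos_of_ne_zero hj⟩⟩
  exact (hZ (show G.Adj x.1 y.1 from hij)).imp
    (fun hx => Or.inl ⟨x, hx, rfl⟩) (fun hy => Or.inl ⟨y, hy, rfl⟩)

end parallelization

theorem ncard_sigma_fst_preimage {V : Type} [Fintype V] (a : V → ℕ) (S : Set V) :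
    (Sigma.fst ⁻¹' S : Set (Σ i, Fin (a i))).ncard = ∑ᶠ i ∈ S, a i := by
  classical
  rw [finsum_mem_eq_toFinset_sum, Set.ncard_eq_toFinset_card',
    show (Sigma.fst ⁻¹' S : Set (Σ i, Fin (a i))).toFinset = S.toFinset.sigma fun _ => .univ by
      ext; simp, Finset.card_sigma]
  simp

/-- **Lemma.** Let `U = supp(a)`. For every minimal vertex cover `Z` of `G^a` there is a
minimal vertex cover `C` of `G` with `Z = p⁻¹(C ∩ U)` and `|Z| = Σ_{i∈C} aᵢ`. -/
theorem minimalCover_parallelization_size {n : ℕ} (G : SimpleGraph (Fin n)) (a : Fin n → ℕ)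
    (Z : Set (Σ i : Fin n, Fin (a i)))
    (hZ : IsMinimalVertexCover (parallelization G a) Z) :
    ∃ C : Set (Fin n), IsMinimalVertexCover G C ∧
      Z = {x : Σ i : Fin n, Fin (a i) | x.1 ∈ C ∩ {i : Fin n | a i ≠ 0}} ∧
      Z.ncard = ∑ᶠ i ∈ C, a i := by
  set B := Sigma.fst '' Z
  have hZB : Z = Sigma.fst ⁻¹' B := parallelization.isMinimalVertexCover_eq_preimage hZ
  obtain ⟨C, hCW, hC⟩ :=
    (parallelization.isVertexCover_image_union hZ.1).exists_isMinimalVertexCover_subset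
  have hBC : B ⊆ C := by
    rintro _ ⟨x, hx, rfl⟩
    obtain ⟨y, hxy, hy⟩ := hZ.exists_adj_notMem hx
    have hyW : y.1 ∉ B ∪ (Function.support a)ᶜ := by
      rintro (hyB | hya)
      · exact hy (hZB ▸ hyB)
      · exact hya (Fin.pos y.2).ne'
    exact (hC.1 hxy).resolve_right fun hyC => hyW (hCW hyC)
  have hCB : C ∩ Function.support a = B := by
    refine Set.Subset.antisymm (fun i ⟨hiC, hia⟩ => ?_) fun i hi => ⟨hBC hi, ?_⟩
    · exact (hCW hiC).resolve_right (not_not.mpr hia)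
    · obtain ⟨x, -, rfl⟩ := hi
      exact (Fin.pos x.2).ne'
  refine ⟨C, hC, hZB.trans (hCB ▸ rfl), ?_⟩
  rw [hZB, ← hCB, ncard_sigma_fst_preimage, finsum_mem_inter_support]
end

section
/- Let G be a connected graph. Then μ(G) ≤ v(G) − 1, and equality holds if and only if G is a tree. -/
open MvPolynomial

/-! In a forest every ear of a generalized ear decomposition is a 2-cycle: a cycle ear would be a
cycle of the graph, and an open ear would close a cycle with the earlier ears, which already
connect its endpoints. So a tree with `n` vertices has exactly `n - 1` ears, all even, whence
`φ = n - 1` and `μ = n - 1`.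

Conversely, any decomposition of a subgraph extends greedily to the whole connected graph: a
2-cycle for each vertex not yet reached, then every missing edge as an odd ear of length one.
Starting from a cycle `C` this uses at most `1 + (n - |C|) ≤ n - 2` even ears, so `μ ≤ n - 2`
whenever `G` is not a tree. -/

open SimpleGraph

section Walks
variable {V : Type*} {G : SimpleGraph V}

lemma SimpleGraph.Connected.mem_of_forall_adj_mem (hG : G.Connected) {S : Set V} (hS : S.Nonempty)
    (h : ∀ u w, u ∈ S → G.Adj u w → w ∈ S) (w : V) : w ∈ S := by
  obtain ⟨u, hu⟩ := hS
  by_contra hw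
  obtain ⟨d, -, hd1, hd2⟩ := (hG.preconnected u w).some.exists_boundary_dart S hu hw
  exact hd2 (h _ _ hd1 d.adj)

lemma SimpleGraph.Walk.edgeSet_fromEdgeSet_edgeSet {u v : V} (p : G.Walk u v) :
    (fromEdgeSet p.edgeSet).edgeSet = p.edgeSet := by
  rw [edgeSet_fromEdgeSet, sdiff_eq_left, Set.disjoint_left]
  exact fun e he => G.not_isDiag_of_mem_edgeSet (p.edges_subset_edgeSet he)

lemma SimpleGraph.Walk.edges_subset_fromEdgeSet {u v : V} (p : G.Walk u v) :
    ∀ e ∈ p.edges, e ∈ (fromEdgeSet p.edgeSet).edgeSet := by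
  simp [p.edgeSet_fromEdgeSet_edgeSet]

lemma SimpleGraph.Walk.reachable_fromEdgeSet_of_mem_support {u v x : V} (p : G.Walk u v)
    (hx : x ∈ p.support) : (fromEdgeSet p.edgeSet).Reachable u x := by
  classical
  let q := p.transfer (fromEdgeSet p.edgeSet) p.edges_subset_fromEdgeSet
  exact (q.takeUntil x (by simpa [q] using hx)).reachable

lemma SimpleGraph.exists_walk_support_eq_of_isChain {L : List V} (hL : L.IsChain G.Adj) {x y : V}
    (hx : L.head? = some x) (hy : L.getLast? = some y) : ∃ p : G.Walk x y, p.support = L := by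
  have hne : L ≠ [] := by rintro rfl; simp at hx
  rw [List.head?_eq_some_head hne, Option.some_inj] at hx
  rw [List.getLast?_eq_some_getLast hne, Option.some_inj] at hy
  exact ⟨(Walk.ofSupport L hne hL).copy hx hy, by simp⟩

lemma SimpleGraph.Walk.IsCycle.length_le_card_toFinset_support [DecidableEq V] {u : V}
    {c : G.Walk u u} (hc : c.IsCycle) : c.length ≤ c.support.toFinset.card := by
  calc c.length = c.support.tail.toFinset.card := by
        rw [List.toFinset_card_of_nodup hc.support_nodup, List.length_tail, c.length_support]
        rfl
    _ ≤ c.support.toFinset.card := Finset.card_le_card fun x hx =>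
        List.mem_toFinset.2 (List.mem_of_mem_tail (List.mem_toFinset.1 hx))

lemma SimpleGraph.IsAcyclic.mem_edgeSet_of_reachable (hG : G.IsAcyclic) {K : SimpleGraph V}
    (hK : K ≤ G) {u v : V} {p : G.Walk u v} (hp : p.IsPath) (hr : K.Reachable u v) {e : Sym2 V}
    (he : e ∈ p.edges) : e ∈ K.edgeSet := by
  classical
  obtain ⟨W⟩ := hr
  have hpW : p = (W.mapLe hK).bypass :=
    congrArg Subtype.val
      ((hG.subsingleton_path u v).elim ⟨p, hp⟩ ⟨_, (W.mapLe hK).bypass_isPath⟩)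
  rw [hpW] at he
  have he' := Walk.edges_bypass_subset_edges _ he
  rw [Walk.edges_mapLe_eq_edges] at he'
  exact W.edges_subset_edgeSet he'

end Walks

lemma List.ncard_biUnion_le_length {α β : Type*} (l : List α) (f : α → Set β)
    (hf : ∀ a ∈ l, (f a).ncard ≤ 1) : (⋃ a ∈ l, f a).ncard ≤ l.length := by
  induction l with
  | nil => simp
  | cons a l ih =>
    have hcons : (⋃ b ∈ a :: l, f b) = f a ∪ ⋃ b ∈ l, f b := by
      ext
      simp
    rw [hcons, List.length_cons]
    have := ih fun b hb => hf b (List.mem_cons_of_mem a hb)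
    have := hf a List.mem_cons_self
    have := Set.ncard_union_le (f a) (⋃ b ∈ l, f b)
    omega

section Ears
variable {V : Type} {G : SimpleGraph V}

lemma earEdgeSet_support {u v : V} (p : G.Walk u v) : earEdgeSet p.support = p.edgeSet := by
  ext e
  simp [earEdgeSet, Walk.edges_eq_zipWith_support, ← List.map_uncurry_zip_eq_zipWith, eq_comm]

lemma earEdgeSet_pair (a b : V) : earEdgeSet [a, b] = {s(a, b)} := by
  ext e
  simp [earEdgeSet]

lemma earEdgeSet_twoCycle (a b : V) : earEdgeSet [a, b, a] = {s(a, b)} := by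
  ext e
  simp [earEdgeSet, Sym2.eq_swap]

lemma reachable_fromEdgeSet_earEdgeSet {L : List V} (hL : L.IsChain G.Adj) {x y : V}
    (hx : x ∈ L) (hy : y ∈ L) : (fromEdgeSet (earEdgeSet L)).Reachable x y := by
  have hne : L ≠ [] := List.ne_nil_of_mem hx
  let p := Walk.ofSupport L hne hL
  have hreach : ∀ z ∈ L, (fromEdgeSet (earEdgeSet L)).Reachable (L.head hne) z := fun z hz => by
    have h := p.reachable_fromEdgeSet_of_mem_support (x := z) (by simpa [p])
    rwa [← earEdgeSet_support, Walk.support_ofSupport] at h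
  exact (hreach x hx).symm.trans (hreach y hy)

lemma IsEarList.two_le_length {L : List V} (h : IsEarList L) : 2 ≤ L.length := by
  rcases h with ⟨h, -⟩ | ⟨h, -⟩ | ⟨v, w, -, rfl⟩
  · exact h
  · omega
  · simp

lemma SimpleGraph.Walk.IsCycle.isProperCycleList {u : V} {c : G.Walk u u} (hc : c.IsCycle) :
    IsProperCycleList c.support := by
  refine ⟨?_, ?_, hc.nodup_dropLast_support⟩
  · have := hc.three_le_length
    have := c.length_support
    omega
  · rw [List.head?_eq_some_head c.support_ne_nil, List.getLast?_eq_some_getLast c.support_ne_nil,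
      Walk.head_support, Walk.getLast_support]

lemma SimpleGraph.Walk.isCycle_of_isProperCycleList {u : V} {p : G.Walk u u}
    (hp : IsProperCycleList p.support) : p.IsCycle := by
  obtain ⟨hlen, -, hnd⟩ := hp
  have hnil : ¬ p.Nil := by
    rw [← Walk.length_eq_zero_iff]
    have := p.length_support
    omega
  refine Walk.isCycle_iff_isPath_tail_and_le_length.2 ⟨Walk.IsPath.mk' ?_, ?_⟩
  · rw [p.support_tail_of_not_nil hnil]
    exact p.tail_support_perm_dropLast_support.nodup_iff.2 hnd
  · have := p.length_support
    omega

lemma not_isProperCycleList_of_isAcyclic (hG : G.IsAcyclic) {L : List V} (hL : L.IsChain G.Adj) :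
    ¬ IsProperCycleList L := fun hc => by
  have hne : L ≠ [] := List.ne_nil_of_length_pos (by have := hc.1; omega)
  obtain ⟨c, hcs⟩ := exists_walk_support_eq_of_isChain hL (List.head?_eq_some_head hne)
    (hc.2.1 ▸ List.head?_eq_some_head hne)
  exact hG c (Walk.isCycle_of_isProperCycleList (by rwa [hcs]))

end Ears

namespace GenEarDecomp
variable {V : Type} {H H' : SimpleGraph V}

lemma earEdgeSet_subset (E : GenEarDecomp H) {L : List V} (hL : L ∈ E.ears) :
    earEdgeSet L ⊆ H.edgeSet :=
  fun e he => (E.edges_cover e).2 ⟨L, hL, he⟩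

lemma mem_flatten_of_adj (E : GenEarDecomp H) {u v : V} (h : H.Adj u v) :
    u ∈ E.ears.flatten := by
  obtain ⟨L, hL, p, hp, hpe⟩ := (E.edges_cover s(u, v)).1 h
  have hu : u = p.1 ∨ u = p.2 := by simpa using congrArg (u ∈ ·) hpe
  rw [List.mem_flatten]
  refine ⟨L, hL, ?_⟩
  rcases hu with rfl | rfl
  · exact (List.of_mem_zip hp).1
  · exact List.mem_of_mem_tail (List.of_mem_zip hp).2

lemma exists_adj (E : GenEarDecomp H) : ∃ u v, H.Adj u v := by
  obtain ⟨L, hL⟩ := List.exists_mem_of_ne_nil _ E.ears_nonempty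
  match L, (E.shape L hL).two_le_length, E.chain_adj L hL with
  | a :: b :: _, _, h => exact ⟨a, b, List.IsChain.rel h⟩

def append (E : GenEarDecomp H) (L : List V) (hedges : H'.edgeSet = H.edgeSet ∪ earEdgeSet L)
    (hL : IsEarList L) (hchain : L.IsChain H'.Adj)
    (hhead : ∀ x ∈ L.head?, x ∈ E.ears.flatten)
    (hlast : ∀ x ∈ L.getLast?, x ∈ E.ears.flatten)
    (hinner : ∀ x ∈ L.tail.dropLast, x ∉ E.ears.flatten)
    (hdisj : Disjoint H.edgeSet (earEdgeSet L)) : GenEarDecomp H' where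
  ears := E.ears ++ [L]
  ears_nonempty := by simp
  chain_adj L' hL' := by
    rcases List.mem_append.1 hL' with hL' | hL'
    · have hle : H ≤ H' := edgeSet_subset_edgeSet.1 (hedges ▸ Set.subset_union_left)
      exact (E.chain_adj L' hL').imp fun _ _ h => hle h
    · rwa [List.mem_singleton.1 hL']
  shape L' hL' := by
    rcases List.mem_append.1 hL' with hL' | hL'
    · exact E.shape L' hL'
    · rwa [List.mem_singleton.1 hL']
  first_cycle := by
    rw [List.head?_append_of_ne_nil _ E.ears_nonempty]
    exact E.first_cycle
  attach_ends i hi h1 := by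
    simp only [List.get_eq_getElem]
    rcases Nat.lt_or_ge i E.ears.length with h | h
    · rw [List.getElem_append_left h, List.take_append_of_le_length h.le]
      exact E.attach_ends i h h1
    · obtain rfl : i = E.ears.length := by simp at hi; omega
      rw [List.getElem_concat_length rfl, List.take_left' rfl]
      exact ⟨hhead, hlast⟩
  attach_inner i hi h1 := by
    simp only [List.get_eq_getElem]
    rcases Nat.lt_or_ge i E.ears.length with h | h
    · rw [List.getElem_append_left h, List.take_append_of_le_length h.le]
      exact E.attach_inner i h h1
    · obtain rfl : i = E.ears.length := by simp at hi; omega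
      rw [List.getElem_concat_length rfl, List.take_left' rfl]
      exact hinner
  edges_disjoint i j hi hj hij := by
    have hold : ∀ k (hk : k < (E.ears ++ [L]).length), k < E.ears.length →
        earEdgeSet ((E.ears ++ [L]).get ⟨k, hk⟩) ⊆ H.edgeSet := fun k hk h => by
      simpa [List.getElem_append_left h] using E.earEdgeSet_subset (List.getElem_mem h)
    have hnew : ∀ k (hk : k < (E.ears ++ [L]).length), E.ears.length ≤ k →
        (E.ears ++ [L]).get ⟨k, hk⟩ = L := fun k hk h => by
      simp at hk
      simp [List.getElem_concat_length (show k = E.ears.length by omega)]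
    rcases Nat.lt_or_ge i E.ears.length with h | h <;>
      rcases Nat.lt_or_ge j E.ears.length with h' | h'
    · simpa [List.getElem_append_left h, List.getElem_append_left h'] using
        E.edges_disjoint i j h h' hij
    · rw [hnew j hj h']
      exact hdisj.mono_left (hold i hi h)
    · rw [hnew i hi h]
      exact (hdisj.mono_left (hold j hj h')).symm
    · simp at hi hj
      omega
  edges_cover e := by
    simp [hedges, E.edges_cover, or_and_right, exists_or]

lemma exists_append_twoCycle [DecidableEq V] (E : GenEarDecomp H) {u w : V}
    (hu : u ∈ E.ears.flatten) (hw : w ∉ E.ears.flatten) :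
    ∃ E' : GenEarDecomp (H ⊔ edge u w), evenEarCount E' = evenEarCount E + 1 ∧
      E'.ears.flatten.toFinset.card = E.ears.flatten.toFinset.card + 1 := by
  have huw : u ≠ w := by rintro rfl; exact hw hu
  refine ⟨E.append [u, w, u] ?_ (Or.inr (Or.inr ⟨u, w, huw, rfl⟩)) ?_ ?_ ?_ ?_ ?_, ?_, ?_⟩
  · rw [edgeSet_sup, edgeSet_edge_of_ne huw, earEdgeSet_twoCycle]
  · simp [edge_adj, huw, huw.symm]
  · simpa using hu
  · simpa using hu
  · simpa using hw
  · rw [earEdgeSet_twoCycle, Set.disjoint_singleton_right]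
    exact fun h => hw (E.mem_flatten_of_adj (H.adj_symm h))
  · simp [evenEarCount, append]
  · simp [append, List.toFinset_append, hu, hw]

lemma exists_append_edge [DecidableEq V] (E : GenEarDecomp H) {u v : V}
    (hu : u ∈ E.ears.flatten) (hv : v ∈ E.ears.flatten) (huv : u ≠ v) (hn : ¬ H.Adj u v) :
    ∃ E' : GenEarDecomp (H ⊔ edge u v), evenEarCount E' = evenEarCount E ∧
      E'.ears.flatten.toFinset = E.ears.flatten.toFinset := by
  refine ⟨E.append [u, v] ?_ (Or.inl ⟨by simp, by simpa using huv⟩) ?_ ?_ ?_ ?_ ?_, ?_, ?_⟩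
  · rw [edgeSet_sup, edgeSet_edge_of_ne huv, earEdgeSet_pair]
  · simp [edge_adj, huv]
  · simpa using hu
  · simpa using hv
  · simp
  · rw [earEdgeSet_pair, Set.disjoint_singleton_right]
    exact hn
  · simp [evenEarCount, append]
  · simp [append, List.toFinset_append, hu, hv]

/-- Each vertex not yet reached costs one even ear (a 2-cycle); missing edges become odd ears. -/
theorem exists_extension_evenEarCount_le [Fintype V] [DecidableEq V] {G : SimpleGraph V}
    (hG : G.Connected) (hHG : H ≤ G) (E : GenEarDecomp H) : ∃ E' : GenEarDecomp G,
      evenEarCount E' + E.ears.flatten.toFinset.card ≤ evenEarCount E + Fintype.card V := by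
  induction H using WellFoundedGT.induction with
  | _ H ih =>
    by_cases hout : ∃ u w, u ∈ E.ears.flatten ∧ w ∉ E.ears.flatten ∧ G.Adj u w
    · obtain ⟨u, w, hu, hw, huw⟩ := hout
      obtain ⟨E₁, hcount, hcard⟩ := E.exists_append_twoCycle hu hw
      have hlt : H < H ⊔ edge u w :=
        lt_sup_edge _ _ _ huw.ne fun h => hw (E.mem_flatten_of_adj h.symm)
      obtain ⟨E', hE'⟩ := ih _ hlt (sup_le hHG ((edge_le_iff G).2 (Or.inr huw))) E₁
      exact ⟨E', by omega⟩
    have hall : ∀ w, w ∈ E.ears.flatten := by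
      obtain ⟨u, v, huv⟩ := E.exists_adj
      refine hG.mem_of_forall_adj_mem (S := {x | x ∈ E.ears.flatten})
        ⟨u, E.mem_flatten_of_adj huv⟩ fun u w hu huw => ?_
      by_contra hw
      exact hout ⟨u, w, hu, hw, huw⟩
    by_cases hmiss : ∃ u v, G.Adj u v ∧ ¬ H.Adj u v
    · obtain ⟨u, v, huv, hn⟩ := hmiss
      obtain ⟨E₁, hcount, hverts⟩ := E.exists_append_edge (hall u) (hall v) huv.ne hn
      obtain ⟨E', hE'⟩ :=
        ih _ (lt_sup_edge _ _ _ huv.ne hn) (sup_le hHG ((edge_le_iff G).2 (Or.inr huv))) E₁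
      exact ⟨E', by rw [← hverts, ← hcount]; exact hE'⟩
    obtain rfl : H = G := le_antisymm hHG fun u v huv => by
      by_contra hn
      exact hmiss ⟨u, v, huv, hn⟩
    exact ⟨E, by have := Finset.card_le_univ E.ears.flatten.toFinset; omega⟩

def ofClosedWalk {G : SimpleGraph V} {u : V} (p : G.Walk u u) (hp : IsCycleEarList p.support) :
    GenEarDecomp (fromEdgeSet p.edgeSet) where
  ears := [p.support]
  ears_nonempty := by simp
  chain_adj L hL := by
    rw [List.mem_singleton.1 hL, ← p.support_transfer p.edges_subset_fromEdgeSet]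
    exact Walk.isChain_adj_support _
  shape L hL := by
    rw [List.mem_singleton.1 hL]
    exact Or.inr hp
  first_cycle := by simpa using hp
  attach_ends i hi h1 := by simp at hi; omega
  attach_inner i hi h1 := by simp at hi; omega
  edges_disjoint i j hi hj hij := by simp at hi hj; omega
  edges_cover e := by
    simp only [List.mem_singleton, exists_eq_left, earEdgeSet_support,
      p.edgeSet_fromEdgeSet_edgeSet]

theorem exists_evenEarCount_le_of_closedWalk [Fintype V] [DecidableEq V] {G : SimpleGraph V}
    (hG : G.Connected) {u : V} (p : G.Walk u u) (hp : IsCycleEarList p.support) :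
    ∃ E : GenEarDecomp G, evenEarCount E + p.support.toFinset.card ≤ 1 + Fintype.card V := by
  have hle : fromEdgeSet p.edgeSet ≤ G :=
    (fromEdgeSet_le G).2 fun e he => p.edges_subset_edgeSet he.1
  obtain ⟨E, hE⟩ := exists_extension_evenEarCount_le hG hle (ofClosedWalk p hp)
  have hcount : evenEarCount (ofClosedWalk p hp) ≤ 1 :=
    (List.length_filter_le _ _).trans (by simp [ofClosedWalk])
  refine ⟨E, le_trans ?_ (hE.trans (by omega))⟩
  simp [ofClosedWalk]

def prefixGraph (E : GenEarDecomp H) (k : ℕ) : SimpleGraph V :=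
  fromEdgeSet (⋃ L ∈ E.ears.take k, earEdgeSet L)

lemma prefixGraph_le (E : GenEarDecomp H) (k : ℕ) : E.prefixGraph k ≤ H := by
  refine (fromEdgeSet_le H).2 fun e he => ?_
  simp only [Set.mem_sdiff, Set.mem_iUnion] at he
  obtain ⟨⟨L, hL, he⟩, -⟩ := he
  exact E.earEdgeSet_subset (List.mem_of_mem_take hL) he

lemma prefixGraph_succ (E : GenEarDecomp H) {k : ℕ} (hk : k < E.ears.length) :
    E.prefixGraph (k + 1) = E.prefixGraph k ⊔ fromEdgeSet (earEdgeSet E.ears[k]) := by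
  rw [prefixGraph, prefixGraph, ← fromEdgeSet_union]
  congr 1
  ext e
  simp only [List.take_add_one, List.getElem?_eq_getElem hk, Option.toList_some, Set.mem_iUnion,
    List.mem_append, List.mem_singleton, Set.mem_union, exists_prop, or_and_right, exists_or,
    exists_eq_left]

lemma reachable_prefixGraph (E : GenEarDecomp H) (k : ℕ) {x y : V}
    (hx : x ∈ (E.ears.take k).flatten) (hy : y ∈ (E.ears.take k).flatten) :
    (E.prefixGraph k).Reachable x y := by
  induction k generalizing x y with
  | zero => simp at hx
  | succ k ih =>
    by_cases hk : k < E.ears.length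
    swap
    · have htake : E.ears.take (k + 1) = E.ears.take k := by
        rw [List.take_of_length_le (by omega), List.take_of_length_le (by omega)]
      rw [htake] at hx hy
      rw [prefixGraph, htake]
      exact ih hx hy
    have hold : E.prefixGraph k ≤ E.prefixGraph (k + 1) := E.prefixGraph_succ hk ▸ le_sup_left
    have hear : fromEdgeSet (earEdgeSet E.ears[k]) ≤ E.prefixGraph (k + 1) :=
      E.prefixGraph_succ hk ▸ le_sup_right
    have hchain := E.chain_adj _ (List.getElem_mem hk)
    have hnew : ∀ z ∈ E.ears[k], ∀ w ∈ (E.ears.take k).flatten,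
        (E.prefixGraph (k + 1)).Reachable z w := by
      intro z hz w hw
      have hk1 : 1 ≤ k := by
        rcases k with _ | k
        · simp at hw
        · omega
      have hne : E.ears[k] ≠ [] := List.ne_nil_of_mem hz
      have hhead : E.ears[k].head hne ∈ (E.ears.take k).flatten :=
        (E.attach_ends k hk hk1).1 _ (List.head?_eq_some_head hne)
      exact ((reachable_fromEdgeSet_earEdgeSet hchain hz (List.head_mem hne)).mono hear).trans
        ((ih hhead hw).mono hold)
    simp only [List.take_add_one, List.getElem?_eq_getElem hk, Option.toList_some,
      List.flatten_append, List.flatten_singleton, List.mem_append] at hx hy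
    rcases hx with hx | hx <;> rcases hy with hy | hy
    · exact (ih hx hy).mono hold
    · exact (hnew y hy x hx).symm
    · exact hnew x hx y hy
    · exact (reachable_fromEdgeSet_earEdgeSet hchain hx hy).mono hear

lemma disjoint_prefix_earEdgeSet (E : GenEarDecomp H) {k : ℕ} (hk : k < E.ears.length) :
    Disjoint (⋃ L ∈ E.ears.take k, earEdgeSet L) (earEdgeSet E.ears[k]) := by
  refine Set.disjoint_iUnion₂_left.2 fun L hL => ?_
  obtain ⟨j, hj, rfl⟩ := List.getElem_of_mem hL
  rw [List.getElem_take]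
  simp only [List.length_take] at hj
  exact E.edges_disjoint j k _ hk (by omega)

/-- The path along the ear would have to lie in `prefixGraph k`, which connects its endpoints. -/
lemma not_isOpenPathList_of_isAcyclic (hH : H.IsAcyclic) (E : GenEarDecomp H) {k : ℕ}
    (hk : k < E.ears.length) (hk1 : 1 ≤ k) : ¬ IsOpenPathList E.ears[k] := by
  intro hpath
  have hne : E.ears[k] ≠ [] := List.ne_nil_of_length_pos (by have := hpath.1; omega)
  obtain ⟨p, hps⟩ := exists_walk_support_eq_of_isChain (E.chain_adj _ (List.getElem_mem hk))
    (List.head?_eq_some_head hne) (List.getLast?_eq_some_getLast hne)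
  have hreach := E.reachable_prefixGraph k
    ((E.attach_ends k hk hk1).1 _ (List.head?_eq_some_head hne))
    ((E.attach_ends k hk hk1).2 _ (List.getLast?_eq_some_getLast hne))
  obtain ⟨e, he⟩ : ∃ e, e ∈ p.edges := by
    refine List.exists_mem_of_length_pos ?_
    have := p.length_support
    rw [hps] at this
    simp only [Walk.length_edges]
    have := hpath.1
    omega
  have hold := hH.mem_edgeSet_of_reachable (E.prefixGraph_le k)
    (Walk.IsPath.mk' (by rw [hps]; exact hpath.2)) hreach he
  have hnew : e ∈ earEdgeSet E.ears[k] := by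
    rw [← hps, earEdgeSet_support]
    exact he
  rw [prefixGraph, edgeSet_fromEdgeSet] at hold
  exact Set.disjoint_left.1 (E.disjoint_prefix_earEdgeSet hk) hold.1 hnew

lemma isTwoCycleList_of_isAcyclic (hH : H.IsAcyclic) (E : GenEarDecomp H) {L : List V}
    (hL : L ∈ E.ears) : IsTwoCycleList L := by
  obtain ⟨k, hk, rfl⟩ := List.getElem_of_mem hL
  have hnotCycle := not_isProperCycleList_of_isAcyclic hH (E.chain_adj _ hL)
  rcases Nat.eq_zero_or_pos k with rfl | hk1
  · have hfirst : E.ears[0] ∈ E.ears.head? := by simp [List.head?_eq_getElem?]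
    exact (E.first_cycle _ hfirst).resolve_left hnotCycle
  rcases E.shape _ hL with hpath | hc | htwo
  · exact absurd hpath (E.not_isOpenPathList_of_isAcyclic hH hk hk1)
  · exact absurd hc hnotCycle
  · exact htwo

lemma ncard_edgeSet_le_evenEarCount (hH : H.IsAcyclic) (E : GenEarDecomp H) :
    H.edgeSet.ncard ≤ evenEarCount E := by
  have htwo : ∀ L ∈ E.ears, IsTwoCycleList L := fun L hL => E.isTwoCycleList_of_isAcyclic hH hL
  have hcount : evenEarCount E = E.ears.length := by
    rw [evenEarCount, List.filter_eq_self.2]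
    intro L hL
    obtain ⟨v, w, -, rfl⟩ := htwo L hL
    simp
  have hedges : H.edgeSet = ⋃ L ∈ E.ears, earEdgeSet L := by
    ext e
    simp [E.edges_cover]
  rw [hcount, hedges]
  refine List.ncard_biUnion_le_length _ _ fun L hL => ?_
  obtain ⟨v, w, -, rfl⟩ := htwo L hL
  simp [earEdgeSet_twoCycle]

end GenEarDecomp

section Phi
variable {V : Type} [Fintype V] {G : SimpleGraph V}

lemma phiGraph_add_two_le_of_not_isAcyclic (hG : G.Connected) (hac : ¬ G.IsAcyclic) :
    phiGraph G + 2 ≤ Fintype.card V := by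
  classical
  obtain ⟨u, c, hc⟩ : ∃ u, ∃ c : G.Walk u u, c.IsCycle := by
    simpa [IsAcyclic] using hac
  obtain ⟨E, hE⟩ :=
    GenEarDecomp.exists_evenEarCount_le_of_closedWalk hG c (Or.inl hc.isProperCycleList)
  have := hc.three_le_length
  have := hc.length_le_card_toFinset_support
  have : phiGraph G ≤ evenEarCount E := Nat.sInf_le ⟨E, rfl⟩
  omega

lemma SimpleGraph.IsTree.phiGraph_add_one (hG : G.IsTree) : phiGraph G + 1 = Fintype.card V := by
  classical
  have hedges : G.edgeSet.ncard + 1 = Fintype.card V := by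
    rw [← hG.card_edgeFinset, ← coe_edgeFinset, Set.ncard_coe_finset]
  by_cases hadj : ∃ r b, G.Adj r b
  · obtain ⟨r, b, hrb⟩ := hadj
    let p : G.Walk r r := .cons hrb (.cons hrb.symm .nil)
    obtain ⟨E₀, hE₀⟩ := GenEarDecomp.exists_evenEarCount_le_of_closedWalk hG.connected p
      (Or.inr ⟨r, b, hrb.ne, rfl⟩)
    have hp : p.support.toFinset.card = 2 := by simp [p, Finset.card_pair hrb.ne.symm]
    have hle : phiGraph G ≤ evenEarCount E₀ := Nat.sInf_le ⟨E₀, rfl⟩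
    have hge : G.edgeSet.ncard ≤ phiGraph G :=
      le_csInf ⟨_, E₀, rfl⟩ fun _ ⟨E, hE⟩ =>
        hE ▸ E.ncard_edgeSet_le_evenEarCount hG.isAcyclic
    omega
  -- a single vertex: there is no decomposition at all, and `sInf ∅ = 0`
  · have hphi : phiGraph G = 0 := by
      have hempty : {m | ∃ E : GenEarDecomp G, evenEarCount E = m} = ∅ :=
        Set.eq_empty_of_forall_notMem fun m ⟨E, _⟩ => hadj E.exists_adj
      rw [phiGraph, hempty, Nat.sInf_empty]
    have hno : G.edgeSet = ∅ := by
      ext e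
      induction e using Sym2.ind
      simpa using fun h => hadj ⟨_, _, h⟩
    rw [hphi, ← hedges, hno, Set.ncard_empty]

end Phi

/-- **Lemma.** For a connected graph `G`, `μ(G) ≤ v(G) − 1`, with equality iff `G` is a tree. -/
theorem mu_le_card {V : Type} [Fintype V] (G : SimpleGraph V) (hconn : G.Connected) :
    muGraph G ≤ Nat.card V - 1 ∧ (muGraph G = Nat.card V - 1 ↔ G.IsTree) := by
  rw [muGraph, Nat.card_eq_fintype_card]
  by_cases hac : G.IsAcyclic
  · have := IsTree.phiGraph_add_one ⟨hconn, hac⟩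
    exact ⟨by omega, fun _ => ⟨hconn, hac⟩, fun _ => by omega⟩
  · have := phiGraph_add_two_le_of_not_isAcyclic hconn hac
    exact ⟨by omega, fun h => by omega, fun h => absurd h.isAcyclic hac⟩
end
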